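/- Let W : X → P(Y) be a channel with cost function ρ : X → [0,∞)^ℓ and α ∈ (0,∞). Let Γ be the set of feasible cost constraints, i.e., Γ = {c ∈ [0,∞)^ℓ : ∃ input distribution P with E_P[ρ] ≤ c}, and for c ∈ Γ let C_{α,W}(c) = sup{I_α(P;W) : E_P[ρ] ≤ c}. Then for every c in the interior of Γ, C_{α,W}(c) = inf_{λ ∈ [0,∞)^ℓ} [C^λ_{α,W} + λ·c]; and if in addition C_{α,W}(c) < ∞, then the set of λ ∈ [0,∞)^ℓ achieving this infimum and satisfying C_{α,W}(c) + λ·(c̃−c) ≥ C_{α,W}(c̃) for all c̃ ∈ [0,∞)^ℓ is a nonempty, convex, compact subset of [0,∞)^ℓ. -/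

import Mathlib

/-!
Rényi divergences between probability measures are nonnegative (Gibbs' inequality for order one,
Hölder's inequality for the other orders), so the Augustin information is nonnegative; being an
infimum of functions that are linear in the input distribution, it is also concave. Hence the set
of pairs `(u, t)` with `E_P[ρ] ≤ u` and `t ≤ I_α(P;W)` for some `P` is convex, upward closed in
`u`, downward closed in `t`, and contains `(c, -1)` in its interior when `c` is an interior
feasible constraint. Separating `(c, g)` from it for `g > C_{α,W}(c)` gives a multiplier `λ ≥ 0`
with `C^λ_{α,W} + λ·c ≤ g`, which together with weak duality is the Legendre-transform formula.

The optimal multipliers form the sublevel set `{λ ≥ 0 : C^λ_{α,W} + λ·c ≤ C_{α,W}(c)}`. It is an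
intersection of superlevel sets of affine functions of `λ`, hence closed and convex; it is bounded
because each `c - (δ/2) eᵢ` is feasible, which bounds `λᵢ δ / 2` by `C_{α,W}(c)`; and it is
nonempty by Cantor's intersection theorem applied to the compact sublevel sets at levels
`g ↓ C_{α,W}(c)`.
-/

open MeasureTheory Filter Set
open scoped ENNReal NNReal Classical

noncomputable section

namespace Augustin

/-- A probability mass function on `X` that is nonzero only on a finite set:
an *input distribution*. -/
structure FinPMF (X : Type*) where
  p : X → ℝ
  supp : Finset X
  nonneg : ∀ x, 0 ≤ p x
  mem_supp : ∀ x, x ∈ supp ↔ p x ≠ 0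
  sum_one : ∑ x ∈ supp, p x = 1

variable {X : Type*} {Y : Type*} [MeasurableSpace Y]

/-- The Kullback–Leibler divergence `D_1(μ‖ν)` (the order one Rényi divergence),
with value `⊤` when `μ` is not absolutely continuous w.r.t. `ν` or the
log-likelihood ratio is not integrable. -/
def KL (μ ν : Measure Y) : EReal :=
  if μ ≪ ν ∧ Integrable (fun y => Real.log ((μ.rnDeriv ν y).toReal)) μ then
    ((∫ y, Real.log ((μ.rnDeriv ν y).toReal) ∂μ : ℝ) : EReal)
  else ⊤

/-- The order `α` Rényi divergence `D_α(μ‖ν)`, computed via the reference measure `μ + ν`. -/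
def RD (α : ℝ) (μ ν : Measure Y) : EReal :=
  if α = 1 then KL μ ν
  else (((α - 1)⁻¹ : ℝ) : EReal) *
    ENNReal.log (∫⁻ y, μ.rnDeriv (μ + ν) y ^ α * ν.rnDeriv (μ + ν) y ^ (1 - α) ∂(μ + ν))

/-- The order `α` tilted probability measure `W_α^Q` of `μ` and `ν`,
`dW_α^Q/dρ = e^{(1-α)D_α(μ‖ν)} (dμ/dρ)^α (dν/dρ)^{1-α}`. -/
def tilted (α : ℝ) (μ ν : Measure Y) : Measure Y :=
  (μ + ν).withDensity fun y =>
    ENNReal.ofReal (Real.exp ((1 - α) * (RD α μ ν).toReal)) *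
      (μ.rnDeriv (μ + ν) y ^ α * ν.rnDeriv (μ + ν) y ^ (1 - α))

/-- The order `α` conditional Rényi divergence `D_α(W‖Q|P) = ∑_x P(x) D_α(W(x)‖Q)`. -/
def condRD (α : ℝ) (W : X → Measure Y) (Q : Measure Y) (P : FinPMF X) : EReal :=
  ∑ x ∈ P.supp, (P.p x : EReal) * RD α (W x) Q

/-- The order `α` conditional Rényi divergence between two channels,
`D_α(V‖W|P) = ∑_x P(x) D_α(V(x)‖W(x))`. -/
def condRDch (α : ℝ) (V W : X → Measure Y) (P : FinPMF X) : EReal :=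
  ∑ x ∈ P.supp, (P.p x : EReal) * RD α (V x) (W x)

/-- The order `α` Augustin information `I_α(P;W) = inf_{Q ∈ P(Y)} D_α(W‖Q|P)`. -/
def AInfo (α : ℝ) (W : X → Measure Y) (P : FinPMF X) : EReal :=
  ⨅ Q : ProbabilityMeasure Y, condRD α W (Q : Measure Y) P

/-- `q_{1,P} = ∑_x P(x) W(x)`. -/
def q1 (W : X → Measure Y) (P : FinPMF X) : Measure Y :=
  ∑ x ∈ P.supp, ENNReal.ofReal (P.p x) • W x

/-- The order `α` Augustin operator `A_α^P(Q) = ∑_x P(x) W_α^Q(x)`. -/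
def Aop (α : ℝ) (W : X → Measure Y) (P : FinPMF X) (Q : Measure Y) : Measure Y :=
  ∑ x ∈ P.supp, ENNReal.ofReal (P.p x) • tilted α (W x) Q

/-- The order `α` mean measure `μ_{α,P}`,
`dμ_{α,P}/dρ = (∑_x P(x)(dW(x)/dρ)^α)^{1/α}` with `ρ = q_{1,P}`. -/
def meanM (α : ℝ) (W : X → Measure Y) (P : FinPMF X) : Measure Y :=
  (q1 W P).withDensity fun y =>
    (∑ x ∈ P.supp, ENNReal.ofReal (P.p x) * (W x).rnDeriv (q1 W P) y ^ α) ^ (1 / α)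

/-- The order `α` Rényi mean `q^G_{α,P} = μ_{α,P}/μ_{α,P}(Y)`. -/
def renyiMean (α : ℝ) (W : X → Measure Y) (P : FinPMF X) : Measure Y :=
  (meanM α W P Set.univ)⁻¹ • meanM α W P

/-- The total variation distance `‖μ − ν‖`. -/
def tvDist (μ ν : Measure Y) : ℝ≥0∞ :=
  ∫⁻ y, ENNReal.ofReal |(μ.rnDeriv (μ + ν) y).toReal - (ν.rnDeriv (μ + ν) y).toReal| ∂(μ + ν)

/-- The Shannon entropy `H(P) = ∑_x P(x) ln(1/P(x))` of an input distribution. -/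
def entropy (P : FinPMF X) : ℝ := ∑ x ∈ P.supp, P.p x * Real.log (P.p x)⁻¹

/-- The joint probability measure `P ⋉ W` on `X × Y`. -/
def jointM [MeasurableSpace X] (W : X → Measure Y) (P : FinPMF X) : Measure (X × Y) :=
  ∑ x ∈ P.supp, ENNReal.ofReal (P.p x) • (W x).map (fun y => (x, y))

/-- The product probability measure `P ⊗ Q` on `X × Y`. -/
def prodM [MeasurableSpace X] (P : FinPMF X) (Q : Measure Y) : Measure (X × Y) :=
  ∑ x ∈ P.supp, ENNReal.ofReal (P.p x) • Q.map (fun y => (x, y))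

/-- The order `α` Rényi information `I^G_α(P;W) = inf_{Q ∈ P(Y)} D_α(P⋉W‖P⊗Q)`. -/
def RGInfo [MeasurableSpace X] (α : ℝ) (W : X → Measure Y) (P : FinPMF X) : EReal :=
  ⨅ Q : ProbabilityMeasure Y, RD α (jointM W P) (prodM P (Q : Measure Y))

/-- Kullback–Leibler divergence `D_1(P‖U) = ∑_x P(x) ln(P(x)/U(x))`
between finitely supported pmfs. -/
def klPMF (P U : FinPMF X) : EReal :=
  if ∀ x, 0 < P.p x → 0 < U.p x then
    ((∑ x ∈ P.supp, P.p x * Real.log (P.p x / U.p x) : ℝ) : EReal)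
  else ⊤

/-- `λ · c` for vectors in `ℝ^ℓ`. -/
def dotl {ℓ : ℕ} (lam c : Fin ℓ → ℝ) : ℝ := ∑ i, lam i * c i

/-- `λ · E_P[ρ]` for a cost function `ρ`. -/
def epCost {ℓ : ℕ} (cost : X → Fin ℓ → ℝ) (lam : Fin ℓ → ℝ) (P : FinPMF X) : ℝ :=
  ∑ x ∈ P.supp, P.p x * dotl lam (cost x)

/-- `E_P[ρ]` as a vector in `ℝ^ℓ`. -/
def epVec {ℓ : ℕ} (cost : X → Fin ℓ → ℝ) (P : FinPMF X) : Fin ℓ → ℝ :=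
  fun i => ∑ x ∈ P.supp, P.p x * cost x i

/-- The order `α` Augustin–Legendre information
`I^λ_α(P;W) = I_α(P;W) − λ·E_P[ρ]`. -/
def ALinfo {ℓ : ℕ} (α : ℝ) (W : X → Measure Y) (cost : X → Fin ℓ → ℝ)
    (lam : Fin ℓ → ℝ) (P : FinPMF X) : EReal :=
  AInfo α W P - ((epCost cost lam P : ℝ) : EReal)

/-- The order `α` Augustin–Legendre capacity `C^λ_{α,W} = sup_P I^λ_α(P;W)`. -/
def ALcap {ℓ : ℕ} (α : ℝ) (W : X → Measure Y) (cost : X → Fin ℓ → ℝ)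
    (lam : Fin ℓ → ℝ) : EReal :=
  ⨆ P : FinPMF X, ALinfo α W cost lam P

/-- The cost constrained Augustin capacity `C_{α,W}(c) = sup {I_α(P;W) : E_P[ρ] ≤ c}`
(equal to `⊥` when the constraint is infeasible). -/
def costCap {ℓ : ℕ} (α : ℝ) (W : X → Measure Y) (cost : X → Fin ℓ → ℝ)
    (c : Fin ℓ → ℝ) : EReal :=
  ⨆ P ∈ {P : FinPMF X | ∀ i, epVec cost P i ≤ c i}, AInfo α W P

end Augustin

section

variable {Ω : Type*} [MeasurableSpace Ω]

theorem lintegral_rpow_mul_rpow_le_one {ρ : Measure Ω} {f g : Ω → ℝ≥0∞} {α : ℝ}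
    (hf : AEMeasurable f ρ) (hg : AEMeasurable g ρ) (hf1 : ∫⁻ ω, f ω ∂ρ = 1)
    (hg1 : ∫⁻ ω, g ω ∂ρ = 1) (hα0 : 0 ≤ α) (hα1 : α ≤ 1) :
    ∫⁻ ω, f ω ^ α * g ω ^ (1 - α) ∂ρ ≤ 1 := by
  simpa [hf1, hg1] using
    ENNReal.lintegral_mul_norm_pow_le hf hg hα0 (sub_nonneg.2 hα1) (add_sub_cancel α 1)

theorem ENNReal.rpow_mul_rpow_one_sub_rpow_inv_mul {a b : ℝ≥0∞} {α : ℝ} (hα : 0 < α)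
    (hb0 : b ≠ 0) (hb : b ≠ ⊤) :
    (a ^ α * b ^ (1 - α)) ^ α⁻¹ * b ^ (1 - α⁻¹) = a := by
  have hexp : (1 - α) * α⁻¹ + (1 - α⁻¹) = 0 := by field_simp; ring
  rw [ENNReal.mul_rpow_of_nonneg _ _ (inv_nonneg.2 hα.le), ← ENNReal.rpow_mul,
    ← ENNReal.rpow_mul, mul_inv_cancel₀ hα.ne', ENNReal.rpow_one, mul_assoc,
    ← ENNReal.rpow_add _ _ hb0 hb, hexp, ENNReal.rpow_zero, mul_one]

theorem one_le_lintegral_rpow_mul_rpow {ρ : Measure Ω} {f g : Ω → ℝ≥0∞} {α : ℝ}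
    (hf : Measurable f) (hg : Measurable g) (hf1 : ∫⁻ ω, f ω ∂ρ = 1)
    (hg1 : ∫⁻ ω, g ω ∂ρ = 1) (hα : 1 < α) :
    1 ≤ ∫⁻ ω, f ω ^ α * g ω ^ (1 - α) ∂ρ := by
  have hα0 : 0 < α := zero_lt_one.trans hα
  set F : Ω → ℝ≥0∞ := fun ω => f ω ^ α * g ω ^ (1 - α) with hF
  have hFm : Measurable F := (hf.pow_const α).mul (hg.pow_const (1 - α))
  -- Off `{g = 0, f ≠ 0}`, `f = F ^ α⁻¹ * g ^ (1 - α⁻¹)` and Hölder applies; on it, `F = ⊤`.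
  by_cases hS : ρ {ω | g ω = 0 ∧ f ω ≠ 0} = 0
  · have hg_top : ∀ᵐ ω ∂ρ, g ω ≠ ⊤ :=
      (ae_lt_top hg (by simp [hg1])).mono fun _ h => h.ne
    have hfF : ∀ᵐ ω ∂ρ, f ω ≤ F ω ^ α⁻¹ * g ω ^ (1 - α⁻¹) := by
      filter_upwards [hg_top, measure_eq_zero_iff_ae_notMem.1 hS] with ω hgω hSω
      rcases eq_or_ne (g ω) 0 with hg0 | hg0
      · simp [show f ω = 0 by simpa [hg0] using hSω]
      · exact (ENNReal.rpow_mul_rpow_one_sub_rpow_inv_mul hα0 hg0 hgω).ge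
    have hHolder := ENNReal.lintegral_mul_norm_pow_le (μ := ρ) hFm.aemeasurable hg.aemeasurable
      (inv_nonneg.2 hα0.le) (sub_nonneg.2 (inv_le_one_of_one_le₀ hα.le)) (add_sub_cancel _ 1)
    rw [hg1, ENNReal.one_rpow, mul_one] at hHolder
    have hpow : (1 : ℝ≥0∞) ^ α⁻¹ ≤ (∫⁻ ω, F ω ∂ρ) ^ α⁻¹ := by
      rw [ENNReal.one_rpow, ← hf1]
      exact (lintegral_mono_ae hfF).trans hHolder
    exact (ENNReal.rpow_le_rpow_iff (inv_pos.2 hα0)).1 hpow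
  · have hFtop : {ω | g ω = 0 ∧ f ω ≠ 0} ⊆ {ω | F ω = ⊤} := by
      rintro ω ⟨hg0, hf0⟩
      simp [hF, hg0, hf0, ENNReal.zero_rpow_of_neg (sub_neg.2 hα), hα0.le]
    rw [lintegral_eq_top_of_measure_eq_top_ne_zero hFm.aemeasurable
      fun h => hS (measure_mono_null hFtop h)]
    exact le_top

end

theorem EReal.coe_mul_sum_of_nonneg {ι : Type*} (s : Finset ι) {t : ℝ} (ht : 0 ≤ t)
    (z : ι → EReal) : (t : EReal) * ∑ i ∈ s, z i = ∑ i ∈ s, (t : EReal) * z i := by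
  induction s using Finset.cons_induction with
  | empty => simp
  | cons a s ha ih =>
    rw [Finset.sum_cons, Finset.sum_cons, ← ih,
      EReal.left_distrib_of_nonneg_of_ne_top (EReal.coe_nonneg.2 ht) (EReal.coe_ne_top t)]

section Separation

theorem geometric_hahn_banach_interior_point {E : Type*} [TopologicalSpace E] [AddCommGroup E]
    [IsTopologicalAddGroup E] [Module ℝ E] [ContinuousSMul ℝ E] {A : Set E} {x : E}
    (hA : Convex ℝ A) (hAint : (interior A).Nonempty) (hx : x ∉ A) :
    ∃ f : StrongDual ℝ E, (∀ a ∈ A, f a ≤ f x) ∧ ∀ a ∈ interior A, f a < f x := by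
  obtain ⟨f, hf⟩ := geometric_hahn_banach_open_point hA.interior isOpen_interior
    fun h => hx (interior_subset h)
  refine ⟨f, fun a ha => ?_, hf⟩
  refine closure_minimal (fun y hy => (hf y hy).le) (isClosed_Iic.preimage f.continuous) ?_
  rw [hA.closure_interior_eq_closure_of_nonempty_interior hAint]
  exact subset_closure ha

variable {ι : Type*} [Fintype ι]

theorem StrongDual.apply_prod_eq_dotProduct_add [DecidableEq ι] (f : StrongDual ℝ ((ι → ℝ) × ℝ))
    (v : ι → ℝ) (t : ℝ) :
    f (v, t) = (fun i => f (Pi.single i 1, 0)) ⬝ᵥ v + f (0, 1) * t := by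
  have hvt : (v, t) =
      ∑ i, v i • ((Pi.single i 1 : ι → ℝ), (0 : ℝ)) + t • ((0 : ι → ℝ), (1 : ℝ)) := by
    ext <;> simp [Prod.fst_sum, Prod.snd_sum, Finset.sum_apply, Pi.single_apply]
  rw [hvt, map_add, map_sum]
  simp only [map_smul, smul_eq_mul, dotProduct, mul_comm]

theorem exists_nonneg_supporting_dotProduct {A : Set ((ι → ℝ) × ℝ)} (hA : Convex ℝ A)
    (hmono : ∀ ⦃u t u' t'⦄, (u, t) ∈ A → u ≤ u' → t' ≤ t → (u', t') ∈ A)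
    {c : ι → ℝ} {r g : ℝ} (hr : (c, r) ∈ interior A) (hg : (c, g) ∉ A) :
    ∃ lam : ι → ℝ, 0 ≤ lam ∧ ∀ u t, (u, t) ∈ A → t ≤ g + lam ⬝ᵥ (u - c) := by
  classical
  obtain ⟨f, hfA, hfint⟩ := geometric_hahn_banach_interior_point hA ⟨_, hr⟩ hg
  set w : ι → ℝ := fun i => f (Pi.single i 1, 0)
  set s := f (0, 1)
  have hf : ∀ v t, f (v, t) = w ⬝ᵥ v + s * t := StrongDual.apply_prod_eq_dotProduct_add f
  have hrg : r < g := lt_of_not_ge fun h => hg (hmono (interior_subset hr) le_rfl h)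
  have hs : 0 < s := by
    have := hfint _ hr
    rw [hf, hf] at this
    nlinarith
  -- `A` contains the ray from `(c, r)` in every direction `eᵢ`, along which `f` stays bounded.
  have hw : w ≤ 0 := by
    intro i
    by_contra! hwi
    set M := s * (g - r) / w i + 1
    have hM : 0 < M :=
      add_pos_of_nonneg_of_pos (div_nonneg (mul_nonneg hs.le (sub_pos.2 hrg).le) hwi.le) one_pos
    have hcM := hfA _ (hmono (interior_subset hr)
      (le_add_of_nonneg_right (smul_nonneg hM.le (Pi.single_nonneg (i := i).2 zero_le_one))) le_rfl)
    rw [hf, hf, dotProduct_add, dotProduct_smul, dotProduct_single, mul_one, smul_eq_mul,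
      add_mul, div_mul_cancel₀ _ hwi.ne'] at hcM
    simp only [Pi.zero_apply] at hwi
    linarith
  refine ⟨-s⁻¹ • w, fun i => ?_, fun u t hut => ?_⟩
  · exact mul_nonneg_of_nonpos_of_nonpos (neg_nonpos.2 (inv_nonneg.2 hs.le)) (hw i)
  · have hut' := hfA _ hut
    rw [hf, hf] at hut'
    have key : s⁻¹ * (w ⬝ᵥ u - w ⬝ᵥ c) ≤ g - t := by
      rw [inv_mul_le_iff₀ hs]
      linarith
    rw [smul_dotProduct, dotProduct_sub, smul_eq_mul]
    linarith

end Separation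

namespace Augustin

variable {X : Type*} {Y : Type*} [MeasurableSpace Y]

theorem KL_nonneg (μ ν : Measure Y) [IsProbabilityMeasure μ] [IsProbabilityMeasure ν] :
    0 ≤ KL μ ν := by
  rw [KL]
  split_ifs with h
  · have := InformationTheory.integral_llr_add_sub_measure_univ_nonneg h.1 h.2
    simp only [probReal_univ, add_sub_cancel_right] at this
    exact EReal.coe_nonneg.2 this
  · exact le_top

theorem RD_nonneg {α : ℝ} (hα : 0 < α) (μ ν : Measure Y)
    [IsProbabilityMeasure μ] [IsProbabilityMeasure ν] : 0 ≤ RD α μ ν := by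
  rw [RD]
  split_ifs with h1
  · exact KL_nonneg μ ν
  have hμ : ∫⁻ y, μ.rnDeriv (μ + ν) y ∂(μ + ν) = 1 := by
    rw [Measure.lintegral_rnDeriv
      (Measure.absolutelyContinuous_of_le (Measure.le_add_right le_rfl))]
    simp
  have hν : ∫⁻ y, ν.rnDeriv (μ + ν) y ∂(μ + ν) = 1 := by
    rw [Measure.lintegral_rnDeriv
      (Measure.absolutelyContinuous_of_le (Measure.le_add_left le_rfl))]
    simp
  rcases lt_or_gt_of_ne h1 with hlt | hgt
  · refine EReal.mul_nonneg_iff.2 (Or.inr ⟨?_, ENNReal.log_le_zero_iff.2 ?_⟩)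
    · exact_mod_cast (inv_neg''.2 (sub_neg.2 hlt)).le
    · exact lintegral_rpow_mul_rpow_le_one (Measure.measurable_rnDeriv _ _).aemeasurable
        (Measure.measurable_rnDeriv _ _).aemeasurable hμ hν hα.le hlt.le
  · refine EReal.mul_nonneg ?_ (ENNReal.zero_le_log_iff.2 ?_)
    · exact_mod_cast (inv_pos.2 (sub_pos.2 hgt)).le
    · exact one_le_lintegral_rpow_mul_rpow (Measure.measurable_rnDeriv _ _)
        (Measure.measurable_rnDeriv _ _) hμ hν hgt

namespace FinPMF

theorem p_eq_zero_of_notMem {P : FinPMF X} {x : X} (hx : x ∉ P.supp) : P.p x = 0 := by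
  by_contra h
  exact hx ((P.mem_supp x).2 h)

theorem sum_eq_sum_supp {M : Type*} [AddCommMonoid M] (P : FinPMF X) {s : Finset X}
    (hs : P.supp ⊆ s) {g : X → M} (hg : ∀ x, P.p x = 0 → g x = 0) :
    ∑ x ∈ s, g x = ∑ x ∈ P.supp, g x :=
  (Finset.sum_subset hs fun x _ hx => hg x (p_eq_zero_of_notMem hx)).symm

def mix (a b : ℝ) (ha : 0 ≤ a) (hb : 0 ≤ b) (hab : a + b = 1) (P Q : FinPMF X) : FinPMF X where
  p x := a * P.p x + b * Q.p x
  supp := (P.supp ∪ Q.supp).filter fun x => a * P.p x + b * Q.p x ≠ 0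
  nonneg x := add_nonneg (mul_nonneg ha (P.nonneg x)) (mul_nonneg hb (Q.nonneg x))
  mem_supp x := by
    simp only [Finset.mem_filter, Finset.mem_union, P.mem_supp, Q.mem_supp, and_iff_right_iff_imp]
    intro h
    by_contra! h'
    simp [h'.1, h'.2] at h
  sum_one := by
    rw [Finset.sum_filter_ne_zero, Finset.sum_add_distrib, ← Finset.mul_sum, ← Finset.mul_sum,
      P.sum_eq_sum_supp Finset.subset_union_left fun _ h => h,
      Q.sum_eq_sum_supp Finset.subset_union_right fun _ h => h, P.sum_one, Q.sum_one,
      mul_one, mul_one, hab]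

variable {a b : ℝ} {ha : 0 ≤ a} {hb : 0 ≤ b} {hab : a + b = 1} {P Q : FinPMF X}

theorem sum_mix_mul (F : X → ℝ) :
    ∑ x ∈ (mix a b ha hb hab P Q).supp, (mix a b ha hb hab P Q).p x * F x
      = a * ∑ x ∈ P.supp, P.p x * F x + b * ∑ x ∈ Q.supp, Q.p x * F x := by
  rw [← (mix a b ha hb hab P Q).sum_eq_sum_supp (Finset.filter_subset _ (P.supp ∪ Q.supp))
      fun x h => by rw [h, zero_mul],
    ← P.sum_eq_sum_supp Finset.subset_union_left fun x h => by rw [h, zero_mul],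
    ← Q.sum_eq_sum_supp Finset.subset_union_right fun x h => by rw [h, zero_mul],
    Finset.mul_sum, Finset.mul_sum, ← Finset.sum_add_distrib]
  exact Finset.sum_congr rfl fun x _ => by simp only [mix]; ring

theorem sum_mix_coe_mul (F : X → EReal) :
    ∑ x ∈ (mix a b ha hb hab P Q).supp, ((mix a b ha hb hab P Q).p x : EReal) * F x
      = (a : EReal) * ∑ x ∈ P.supp, (P.p x : EReal) * F x
        + (b : EReal) * ∑ x ∈ Q.supp, (Q.p x : EReal) * F x := by
  rw [← (mix a b ha hb hab P Q).sum_eq_sum_supp (Finset.filter_subset _ (P.supp ∪ Q.supp))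
      fun x h => by rw [h, EReal.coe_zero, zero_mul],
    ← P.sum_eq_sum_supp Finset.subset_union_left fun x h => by rw [h, EReal.coe_zero, zero_mul],
    ← Q.sum_eq_sum_supp Finset.subset_union_right fun x h => by rw [h, EReal.coe_zero, zero_mul],
    EReal.coe_mul_sum_of_nonneg _ ha, EReal.coe_mul_sum_of_nonneg _ hb, ← Finset.sum_add_distrib]
  refine Finset.sum_congr rfl fun x _ => ?_
  simp only [mix]
  rw [EReal.coe_add, EReal.right_distrib_of_nonneg
      (EReal.coe_nonneg.2 (mul_nonneg ha (P.nonneg x)))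
      (EReal.coe_nonneg.2 (mul_nonneg hb (Q.nonneg x))),
    EReal.coe_mul, EReal.coe_mul, mul_assoc, mul_assoc]

end FinPMF

open FinPMF

variable {ℓ : ℕ} {α : ℝ} {W : X → Measure Y} {cost : X → Fin ℓ → ℝ}

theorem AInfo_nonneg [∀ x, IsProbabilityMeasure (W x)] (hα : 0 < α) (P : FinPMF X) :
    0 ≤ AInfo α W P :=
  le_iInf fun _ => Finset.sum_nonneg fun x _ =>
    mul_nonneg (EReal.coe_nonneg.2 (P.nonneg x)) (RD_nonneg hα _ _)

theorem AInfo_mix {a b : ℝ} (ha : 0 ≤ a) (hb : 0 ≤ b) (hab : a + b = 1) (P Q : FinPMF X) :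
    (a : EReal) * AInfo α W P + (b : EReal) * AInfo α W Q ≤ AInfo α W (mix a b ha hb hab P Q) :=
  le_iInf fun Q' => by
    rw [condRD, sum_mix_coe_mul]
    exact add_le_add (mul_le_mul_of_nonneg_left (iInf_le _ Q') (EReal.coe_nonneg.2 ha))
      (mul_le_mul_of_nonneg_left (iInf_le _ Q') (EReal.coe_nonneg.2 hb))

theorem epVec_mix {a b : ℝ} (ha : 0 ≤ a) (hb : 0 ≤ b) (hab : a + b = 1) (P Q : FinPMF X) :
    epVec cost (mix a b ha hb hab P Q) = a • epVec cost P + b • epVec cost Q :=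
  funext fun i => sum_mix_mul fun x => cost x i

theorem dotl_eq_dotProduct (lam c : Fin ℓ → ℝ) : dotl lam c = lam ⬝ᵥ c := rfl

theorem epCost_eq_dotProduct (lam : Fin ℓ → ℝ) (P : FinPMF X) :
    epCost cost lam P = lam ⬝ᵥ epVec cost P := by
  simp only [epCost, dotl, epVec, dotProduct, Finset.mul_sum]
  rw [Finset.sum_comm]
  exact Finset.sum_congr rfl fun i _ => Finset.sum_congr rfl fun x _ => by ring

theorem AInfo_le_costCap {P : FinPMF X} {c : Fin ℓ → ℝ} (hP : epVec cost P ≤ c) :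
    AInfo α W P ≤ costCap α W cost c :=
  le_iSup₂ (f := fun P (_ : P ∈ {P : FinPMF X | ∀ i, epVec cost P i ≤ c i}) => AInfo α W P) P hP

theorem costCap_nonneg [∀ x, IsProbabilityMeasure (W x)] (hα : 0 < α) {P : FinPMF X}
    {c : Fin ℓ → ℝ} (hP : epVec cost P ≤ c) : 0 ≤ costCap α W cost c :=
  (AInfo_nonneg hα P).trans (AInfo_le_costCap hP)

theorem costCap_le_ALcap_add {lam : Fin ℓ → ℝ} (hlam : 0 ≤ lam) (c : Fin ℓ → ℝ) :
    costCap α W cost c ≤ ALcap α W cost lam + ((dotl lam c : ℝ) : EReal) := by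
  refine iSup₂_le fun P hP => le_trans ?_ (add_le_add_left (le_iSup _ P) _)
  have hP' : epCost cost lam P ≤ dotl lam c := by
    rw [epCost_eq_dotProduct]
    exact dotProduct_le_dotProduct_of_nonneg_left (fun i => hP i) hlam
  rw [ALinfo, sub_eq_add_neg, add_assoc, ← EReal.coe_neg, ← EReal.coe_add]
  exact le_add_of_nonneg_right (EReal.coe_nonneg.2 (by linarith))

theorem ALcap_add_le_iff {lam c : Fin ℓ → ℝ} {g : ℝ} :
    ALcap α W cost lam + ((dotl lam c : ℝ) : EReal) ≤ g ↔
      ∀ P, AInfo α W P ≤ ((g + lam ⬝ᵥ (epVec cost P - c) : ℝ) : EReal) := by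
  rw [← EReal.le_sub_iff_add_le (.inl (EReal.coe_ne_bot _)) (.inl (EReal.coe_ne_top _)), ALcap,
    iSup_le_iff]
  refine forall_congr' fun P => ?_
  rw [ALinfo, EReal.sub_le_iff_le_add (.inl (EReal.coe_ne_bot _)) (.inl (EReal.coe_ne_top _)),
    ← EReal.coe_sub, ← EReal.coe_add, epCost_eq_dotProduct, dotProduct_sub, dotl_eq_dotProduct]
  ring_nf

/-- Up to its boundary, the hypograph of `c ↦ C_{α,W}(c)`. -/
def capHypograph (α : ℝ) (W : X → Measure Y) (cost : X → Fin ℓ → ℝ) :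
    Set ((Fin ℓ → ℝ) × ℝ) :=
  {p | ∃ P : FinPMF X, epVec cost P ≤ p.1 ∧ (p.2 : EReal) ≤ AInfo α W P}

theorem convex_capHypograph : Convex ℝ (capHypograph α W cost) := by
  rintro ⟨u, t⟩ ⟨P, hPu, htP⟩ ⟨u', t'⟩ ⟨Q, hQu, htQ⟩ a b ha hb hab
  refine ⟨mix a b ha hb hab P Q, ?_, ?_⟩
  · rw [epVec_mix]
    exact add_le_add (smul_le_smul_of_nonneg_left hPu ha) (smul_le_smul_of_nonneg_left hQu hb)
  · refine le_trans ?_ (AInfo_mix ha hb hab P Q)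
    simp only [Prod.snd_add, Prod.smul_snd, smul_eq_mul, EReal.coe_add, EReal.coe_mul]
    exact add_le_add (mul_le_mul_of_nonneg_left htP (EReal.coe_nonneg.2 ha))
      (mul_le_mul_of_nonneg_left htQ (EReal.coe_nonneg.2 hb))

theorem capHypograph_mono ⦃u : Fin ℓ → ℝ⦄ ⦃t : ℝ⦄ ⦃u' : Fin ℓ → ℝ⦄ ⦃t' : ℝ⦄
    (h : (u, t) ∈ capHypograph α W cost) (hu : u ≤ u') (ht : t' ≤ t) :
    (u', t') ∈ capHypograph α W cost :=
  let ⟨P, hPu, htP⟩ := h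
  ⟨P, hPu.trans hu, (EReal.coe_le_coe_iff.2 ht).trans htP⟩

variable {c : Fin ℓ → ℝ}

theorem mem_interior_capHypograph [∀ x, IsProbabilityMeasure (W x)] (hα : 0 < α)
    (hc : c ∈ interior {c' | ∃ P : FinPMF X, epVec cost P ≤ c'}) :
    (c, -1) ∈ interior (capHypograph α W cost) := by
  refine (isOpen_interior.prod isOpen_Iio).subset_interior_iff.2 ?_ ⟨hc, neg_one_lt_zero⟩
  rintro ⟨u, t⟩ ⟨hu, ht⟩
  obtain ⟨P, hP⟩ := interior_subset hu
  exact ⟨P, hP, (EReal.coe_le_coe_iff.2 (le_of_lt ht)).trans (AInfo_nonneg hα P)⟩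

theorem exists_ALcap_add_le [∀ x, IsProbabilityMeasure (W x)] (hα : 0 < α)
    (hc : c ∈ interior {c' | ∃ P : FinPMF X, epVec cost P ≤ c'}) {g : ℝ}
    (hg : costCap α W cost c < g) :
    ∃ lam, 0 ≤ lam ∧ ALcap α W cost lam + ((dotl lam c : ℝ) : EReal) ≤ g := by
  have hcg : (c, g) ∉ capHypograph α W cost := fun ⟨P, hP, hgP⟩ =>
    (hgP.trans (AInfo_le_costCap hP)).not_gt hg
  obtain ⟨lam, hlam, hsupp⟩ := exists_nonneg_supporting_dotProduct convex_capHypograph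
    capHypograph_mono (mem_interior_capHypograph hα hc) hcg
  refine ⟨lam, hlam, ALcap_add_le_iff.2 fun P => EReal.ge_of_forall_gt_iff_ge.1 fun t ht => ?_⟩
  exact EReal.coe_le_coe_iff.2 (hsupp _ _ ⟨P, le_rfl, ht.le⟩)

theorem costCap_eq_iInf_ALcap_add [∀ x, IsProbabilityMeasure (W x)] (hα : 0 < α)
    (hc : c ∈ interior {c' | ∃ P : FinPMF X, epVec cost P ≤ c'}) :
    costCap α W cost c =
      ⨅ lam ∈ {l : Fin ℓ → ℝ | ∀ i, 0 ≤ l i}, ALcap α W cost lam + ((dotl lam c : ℝ) : EReal) :=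
  le_antisymm (le_iInf₂ fun _ hlam => costCap_le_ALcap_add hlam c) <|
    EReal.le_of_forall_lt_iff_le.1 fun _ hg =>
      let ⟨lam, hlam, hle⟩ := exists_ALcap_add_le hα hc hg
      (iInf₂_le lam hlam).trans hle

def dualSublevel (α : ℝ) (W : X → Measure Y) (cost : X → Fin ℓ → ℝ) (c : Fin ℓ → ℝ) (g : ℝ) :
    Set (Fin ℓ → ℝ) :=
  {lam | 0 ≤ lam ∧ ALcap α W cost lam + ((dotl lam c : ℝ) : EReal) ≤ g}

theorem dualSublevel_eq_inter_iInter (g : ℝ) :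
    dualSublevel α W cost c g = Set.Ici 0 ∩
      ⋂ P : FinPMF X, {lam | AInfo α W P ≤ ((g + lam ⬝ᵥ (epVec cost P - c) : ℝ) : EReal)} := by
  ext lam
  simp only [dualSublevel, ALcap_add_le_iff, Set.mem_ofPred_eq, Set.mem_inter_iff, Set.mem_Ici,
    Set.mem_iInter]

theorem dualSublevel_mono {g g' : ℝ} (h : g ≤ g') :
    dualSublevel α W cost c g ⊆ dualSublevel α W cost c g' :=
  fun _ ⟨hlam, hle⟩ => ⟨hlam, hle.trans (EReal.coe_le_coe_iff.2 h)⟩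

theorem isClosed_dualSublevel (g : ℝ) : IsClosed (dualSublevel α W cost c g) := by
  rw [dualSublevel_eq_inter_iInter]
  exact isClosed_Ici.inter <| isClosed_iInter fun P => isClosed_le continuous_const <|
    continuous_coe_real_ereal.comp <| continuous_const.add <|
      continuous_id.dotProduct continuous_const

theorem convex_dualSublevel (g : ℝ) : Convex ℝ (dualSublevel α W cost c g) := by
  rw [dualSublevel_eq_inter_iInter]
  refine (convex_Ici 0).inter <| convex_iInter fun P => ?_
  have hT : Set.OrdConnected {r : ℝ | AInfo α W P ≤ ((g + r : ℝ) : EReal)} :=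
    ⟨fun _ hx _ _ _ hz => hx.trans (EReal.coe_le_coe_iff.2 (by linarith [hz.1]))⟩
  exact hT.convex.is_linear_preimage
    ⟨fun x y => add_dotProduct x y _, fun a x => smul_dotProduct a x _⟩

theorem dotProduct_sub_le_of_mem_dualSublevel [∀ x, IsProbabilityMeasure (W x)] (hα : 0 < α)
    {g : ℝ} {lam c' : Fin ℓ → ℝ} (hlam : lam ∈ dualSublevel α W cost c g) {P : FinPMF X}
    (hP : epVec cost P ≤ c') : lam ⬝ᵥ (c - c') ≤ g := by
  have hP' : 0 ≤ g + lam ⬝ᵥ (epVec cost P - c) :=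
    EReal.coe_nonneg.1 ((AInfo_nonneg hα P).trans (ALcap_add_le_iff.1 hlam.2 P))
  have hc' : lam ⬝ᵥ (epVec cost P - c) ≤ lam ⬝ᵥ (c' - c) :=
    dotProduct_le_dotProduct_of_nonneg_left (sub_le_sub_right hP c) hlam.1
  rw [← neg_sub, dotProduct_neg]
  linarith

theorem isCompact_dualSublevel [∀ x, IsProbabilityMeasure (W x)] (hα : 0 < α)
    (hc : c ∈ interior {c' | ∃ P : FinPMF X, epVec cost P ≤ c'}) (g : ℝ) :
    IsCompact (dualSublevel α W cost c g) := by
  obtain ⟨δ, hδ, hball⟩ := Metric.mem_nhds_iff.1 (mem_interior_iff_mem_nhds.1 hc)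
  refine (isCompact_Icc (a := 0) (b := fun _ => g / (δ / 2))).of_isClosed_subset
    (isClosed_dualSublevel g)
    fun lam hlam => ⟨hlam.1, fun i => ?_⟩
  have hci : c - Pi.single i (δ / 2) ∈ Metric.ball c δ := by
    rw [Metric.mem_ball, dist_eq_norm, sub_sub_cancel_left, norm_neg, Pi.norm_single,
      Real.norm_of_nonneg (by positivity)]
    linarith
  obtain ⟨P, hP⟩ := hball hci
  have hi := dotProduct_sub_le_of_mem_dualSublevel hα hlam hP
  rw [sub_sub_cancel, dotProduct_single] at hi
  rwa [le_div_iff₀ (by positivity)]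

theorem nonempty_dualSublevel [∀ x, IsProbabilityMeasure (W x)] (hα : 0 < α)
    (hc : c ∈ interior {c' | ∃ P : FinPMF X, epVec cost P ≤ c'}) {γ : ℝ}
    (hγ : costCap α W cost c = γ) : (dualSublevel α W cost c γ).Nonempty := by
  have : Nonempty (Set.Ioi γ) := ⟨⟨γ + 1, by simp⟩⟩
  obtain ⟨lam, hlam⟩ := IsCompact.nonempty_iInter_of_directed_nonempty_isCompact_isClosed
    (fun g : Set.Ioi γ => dualSublevel α W cost c g)
    (Monotone.directed_ge fun _ _ h => dualSublevel_mono h)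
    (fun g => exists_ALcap_add_le hα hc (hγ ▸ EReal.coe_lt_coe_iff.2 g.2))
    (fun g => isCompact_dualSublevel hα hc g) (fun g => isClosed_dualSublevel g)
  rw [Set.mem_iInter] at hlam
  exact ⟨lam, (hlam ⟨γ + 1, by simp⟩).1, EReal.le_of_forall_lt_iff_le.1 fun g hg =>
    (hlam ⟨g, EReal.coe_lt_coe_iff.1 hg⟩).2⟩

theorem setOf_optimal_multiplier_eq_dualSublevel {γ : ℝ} (hγ : costCap α W cost c = γ) :
    {lam : Fin ℓ → ℝ | (∀ i, 0 ≤ lam i) ∧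
        costCap α W cost c = ALcap α W cost lam + ((dotl lam c : ℝ) : EReal) ∧
        ∀ c' : Fin ℓ → ℝ, (∀ i, 0 ≤ c' i) →
          costCap α W cost c' ≤ costCap α W cost c + ((dotl lam (c' - c) : ℝ) : EReal)} =
      dualSublevel α W cost c γ := by
  ext lam
  refine ⟨fun ⟨hlam, heq, _⟩ => ⟨hlam, (heq.symm.trans hγ).le⟩, fun ⟨hlam, hle⟩ => ?_⟩
  have heq : costCap α W cost c = ALcap α W cost lam + ((dotl lam c : ℝ) : EReal) :=
    le_antisymm (costCap_le_ALcap_add hlam c) (hγ ▸ hle)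
  refine ⟨hlam, heq, fun c' _ => ?_⟩
  calc costCap α W cost c'
      ≤ ALcap α W cost lam + ((dotl lam c' : ℝ) : EReal) := costCap_le_ALcap_add hlam c'
    _ = ALcap α W cost lam + ((dotl lam c : ℝ) : EReal) + ((dotl lam (c' - c) : ℝ) : EReal) := by
      rw [add_assoc, ← EReal.coe_add, dotl_eq_dotProduct, dotl_eq_dotProduct, dotl_eq_dotProduct,
        dotProduct_sub, add_sub_cancel]
    _ = costCap α W cost c + ((dotl lam (c' - c) : ℝ) : EReal) := by rw [heq]

end Augustin

open Augustin in
theorem cost_constrained_capacity_duality_general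
    {X Y : Type*} [MeasurableSpace Y] {ℓ : ℕ} (W : X → Measure Y)
    [∀ x, IsProbabilityMeasure (W x)]
    (cost : X → Fin ℓ → ℝ)
    (α : ℝ) (hα : 0 < α) (c : Fin ℓ → ℝ)
    (hc : c ∈ interior {c' : Fin ℓ → ℝ |
      (∀ i, 0 ≤ c' i) ∧ ∃ P : FinPMF X, ∀ i, epVec cost P i ≤ c' i}) :
    costCap α W cost c =
        (⨅ lam ∈ {l : Fin ℓ → ℝ | ∀ i, 0 ≤ l i},
          (ALcap α W cost lam + ((dotl lam c : ℝ) : EReal))) ∧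
      (costCap α W cost c ≠ ⊤ →
        {lam : Fin ℓ → ℝ | (∀ i, 0 ≤ lam i) ∧
            costCap α W cost c = ALcap α W cost lam + ((dotl lam c : ℝ) : EReal) ∧
            ∀ c' : Fin ℓ → ℝ, (∀ i, 0 ≤ c' i) →
              costCap α W cost c' ≤
                costCap α W cost c + ((dotl lam (c' - c) : ℝ) : EReal)}.Nonempty ∧
          Convex ℝ {lam : Fin ℓ → ℝ | (∀ i, 0 ≤ lam i) ∧
            costCap α W cost c = ALcap α W cost lam + ((dotl lam c : ℝ) : EReal) ∧
            ∀ c' : Fin ℓ → ℝ, (∀ i, 0 ≤ c' i) →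
              costCap α W cost c' ≤
                costCap α W cost c + ((dotl lam (c' - c) : ℝ) : EReal)} ∧
          IsCompact {lam : Fin ℓ → ℝ | (∀ i, 0 ≤ lam i) ∧
            costCap α W cost c = ALcap α W cost lam + ((dotl lam c : ℝ) : EReal) ∧
            ∀ c' : Fin ℓ → ℝ, (∀ i, 0 ≤ c' i) →
              costCap α W cost c' ≤
                costCap α W cost c + ((dotl lam (c' - c) : ℝ) : EReal)}) := by
  have hF : c ∈ interior {c' | ∃ P : FinPMF X, epVec cost P ≤ c'} :=
    interior_mono (fun _ h => h.2) hc
  refine ⟨costCap_eq_iInf_ALcap_add hα hF, fun hfin => ?_⟩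
  obtain ⟨P, hP⟩ := interior_subset hF
  have hbot : costCap α W cost c ≠ ⊥ := ne_bot_of_le_ne_bot EReal.zero_ne_bot (costCap_nonneg hα hP)
  obtain ⟨γ, hγ⟩ : ∃ γ : ℝ, costCap α W cost c = γ := ⟨_, (EReal.coe_toReal hfin hbot).symm⟩
  rw [setOf_optimal_multiplier_eq_dualSublevel hγ]
  exact ⟨nonempty_dualSublevel hα hF hγ, convex_dualSublevel γ, isCompact_dualSublevel hα hF γ⟩

open Augustin in
/-- Lemma `Lcapacity`-(c): for cost constraints in the interior of
the feasible set, the cost constrained Augustin capacity is the Legendre transform of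
the A-L capacity, and when finite the set of optimal Lagrange multipliers (which also
support the capacity as a function of the constraint) is nonempty, convex and compact. -/
theorem cost_constrained_capacity_duality
    {X Y : Type*} [MeasurableSpace Y] {ℓ : ℕ} (W : X → Measure Y)
    [∀ x, IsProbabilityMeasure (W x)]
    (cost : X → Fin ℓ → ℝ) (hcost : ∀ x i, 0 ≤ cost x i)
    (α : ℝ) (hα : 0 < α) (c : Fin ℓ → ℝ)
    (hc : c ∈ interior {c' : Fin ℓ → ℝ |
      (∀ i, 0 ≤ c' i) ∧ ∃ P : FinPMF X, ∀ i, epVec cost P i ≤ c' i}) :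
    costCap α W cost c =
        (⨅ lam ∈ {l : Fin ℓ → ℝ | ∀ i, 0 ≤ l i},
          (ALcap α W cost lam + ((dotl lam c : ℝ) : EReal))) ∧
      (costCap α W cost c ≠ ⊤ →
        {lam : Fin ℓ → ℝ | (∀ i, 0 ≤ lam i) ∧
            costCap α W cost c = ALcap α W cost lam + ((dotl lam c : ℝ) : EReal) ∧
            ∀ c' : Fin ℓ → ℝ, (∀ i, 0 ≤ c' i) →
              costCap α W cost c' ≤
                costCap α W cost c + ((dotl lam (c' - c) : ℝ) : EReal)}.Nonempty ∧
          Convex ℝ {lam : Fin ℓ → ℝ | (∀ i, 0 ≤ lam i) ∧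
            costCap α W cost c = ALcap α W cost lam + ((dotl lam c : ℝ) : EReal) ∧
            ∀ c' : Fin ℓ → ℝ, (∀ i, 0 ≤ c' i) →
              costCap α W cost c' ≤
                costCap α W cost c + ((dotl lam (c' - c) : ℝ) : EReal)} ∧
          IsCompact {lam : Fin ℓ → ℝ | (∀ i, 0 ≤ lam i) ∧
            costCap α W cost c = ALcap α W cost lam + ((dotl lam c : ℝ) : EReal) ∧
            ∀ c' : Fin ℓ → ℝ, (∀ i, 0 ≤ c' i) →
              costCap α W cost c' ≤
                costCap α W cost c + ((dotl lam (c' - c) : ℝ) : EReal)}) :=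
  cost_constrained_capacity_duality_general W cost α hα c hc
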